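/- arXiv:1112.5131 — 8 statements merged into one kernel-verified Lean document; each statement's English description precedes it below -/
import Mathlib

section
/- Let R = ℤ[x_1,...,x_N] and let c4, c6 ∈ R be primitive polynomials (content 1) satisfying c4^3 - c6^2 = 1728·Δ for some Δ ∈ R. If there exists a1 ∈ R with a1^2·c4 + c6 ≡ 0 (mod 4), then there exist b2 ∈ R with c4 ≡ b2^2 (mod 24), b2·c4 + c6 ≡ 0 (mod 12), and b2^3 - 3·b2·c4 - 2·c6 ≡ 0 (mod 432). -/
/-!
Write `e = c4 - t²` and `f = t c4 + c6`. The identity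
`c4² (t³ - 3 t c4 - 2 c6) = -(t (c4³ - c6²) + f (2 c4 e + t f))`
turns the required congruence for `t³ - 3 t c4 - 2 c6` into one for `c4²` times it, and since
a primitive `c4` is prime to 2 and 3 (which are prime in `ℤ[x₁, …, x_N]`) the factor `c4²` can
be cancelled. At 2 one takes `t = a1²`; at 3, reducing `c4³ ≡ c6²` to the UFD `𝔽₃[x₁, …, x_N]`
makes `c4` a square `w²` with `c6 = c4 w` there, and `t` lifts `-w`. The two local choices
are glued by the Chinese remainder theorem.
-/

open MvPolynomial

section CommRing

variable {R : Type*} [CommRing R]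

theorem sq_mul_cubic_eq (c4 c6 t : R) :
    c4 ^ 2 * (t ^ 3 - 3 * t * c4 - 2 * c6) =
      -(t * (c4 ^ 3 - c6 ^ 2) +
        (t * c4 + c6) * (2 * c4 * (c4 - t ^ 2) + t * (t * c4 + c6))) := by
  ring

section IsDomain

variable [IsDomain R]

theorem Prime.pow_dvd_of_dvd_pow_mul {p a b : R} (hp : Prime p) (ha : ¬p ∣ a) {k n : ℕ}
    (h : p ^ n ∣ a ^ k * b) : p ^ n ∣ b :=
  hp.pow_dvd_of_dvd_mul_left n (fun h' => ha (hp.dvd_of_dvd_pow h')) h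

theorem dvd_sub_sq_and_dvd_cubic_of_prime_two {c4 c6 t : R} (hp : Prime (2 : R))
    (hc4 : ¬2 ∣ c4) (hf : 4 ∣ t * c4 + c6) (hD : 64 ∣ c4 ^ 3 - c6 ^ 2) :
    8 ∣ c4 - t ^ 2 ∧ 16 ∣ t ^ 3 - 3 * t * c4 - 2 * c6 := by
  obtain ⟨A, hA⟩ := hf
  obtain ⟨B, hB⟩ := hD
  have he : (2 : R) ^ 3 ∣ c4 - t ^ 2 := hp.pow_dvd_of_dvd_pow_mul hc4 (k := 2)
    ⟨8 * B - A * (t * c4 - 2 * A), by linear_combination hB + (c6 - t * c4 + 4 * A) * hA⟩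
  obtain ⟨u, hu⟩ := he
  have hT : (2 : R) ^ 4 ∣ t ^ 3 - 3 * t * c4 - 2 * c6 := hp.pow_dvd_of_dvd_pow_mul hc4 (k := 2)
    ⟨-(4 * t * B + A * (4 * c4 * u + t * A)), by
      rw [sq_mul_cubic_eq, hA, hB, hu]; ring⟩
  norm_num at hT
  exact ⟨⟨u, by linear_combination hu⟩, hT⟩

theorem dvd_cubic_of_prime_three {c4 c6 t : R} (hp : Prime (3 : R)) (hc4 : ¬3 ∣ c4)
    (hf : 3 ∣ t * c4 + c6) (hD : 27 ∣ c4 ^ 3 - c6 ^ 2) :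
    27 ∣ t ^ 3 - 3 * t * c4 - 2 * c6 := by
  obtain ⟨v, hv⟩ := hf
  obtain ⟨w, hw⟩ := hD
  have hg : (3 : R) ^ 2 ∣ c4 * (c4 - t ^ 2) + 2 * t * (t * c4 + c6) :=
    hp.pow_dvd_of_dvd_mul_left 2 hc4
      ⟨3 * w + v ^ 2, by linear_combination hw + (t * c4 + c6 + 3 * v) * hv⟩
  obtain ⟨m, hm⟩ := hg
  have hT : (3 : R) ^ 3 ∣ t ^ 3 - 3 * t * c4 - 2 * c6 := hp.pow_dvd_of_dvd_pow_mul hc4 (k := 2)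
    ⟨-(t * w + v * (2 * m - t * v)), by
      rw [sq_mul_cubic_eq, hw, hv]; linear_combination (-6 * v) * hm + 12 * v * t * hv⟩
  norm_num at hT
  exact hT

end IsDomain

theorem dvd_sub_sq_of_dvd_sub {n b s c : R} (hb : n ∣ b - s) (hs : n ∣ c - s ^ 2) :
    n ∣ c - b ^ 2 := by
  have : c - b ^ 2 = (c - s ^ 2) - (b - s) * (b + s) := by ring
  exact this ▸ dvd_sub hs (hb.mul_right _)

theorem dvd_mul_add_of_dvd_sub {n b s c d : R} (hb : n ∣ b - s) (hs : n ∣ s * c + d) :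
    n ∣ b * c + d := by
  have : b * c + d = (s * c + d) + (b - s) * c := by ring
  exact this ▸ dvd_add hs (hb.mul_right _)

theorem dvd_cubic_of_dvd_sub {n b s c d : R} (hb : n ∣ b - s)
    (hs : n ∣ s ^ 3 - 3 * s * c - 2 * d) : n ∣ b ^ 3 - 3 * b * c - 2 * d := by
  have : b ^ 3 - 3 * b * c - 2 * d =
      (s ^ 3 - 3 * s * c - 2 * d) + (b - s) * (b ^ 2 + b * s + s ^ 2 - 3 * c) := by ring
  exact this ▸ dvd_add hs (hb.mul_right _)

theorem exists_dvd_sixteen_sub_and_dvd_twentyseven_sub (s t : R) :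
    ∃ b : R, 16 ∣ b - s ∧ 27 ∣ b - t :=
  -- `81 ≡ 1, 352 ≡ 0 (mod 16)` and `81 ≡ 0, 352 ≡ 1 (mod 27)`
  ⟨81 * s + 352 * t, ⟨5 * s + 22 * t, by ring⟩, ⟨3 * s + 13 * t, by ring⟩⟩

theorem exists_of_two_adic_of_three_adic {c4 c6 s t : R}
    (hs : 8 ∣ c4 - s ^ 2 ∧ 4 ∣ s * c4 + c6 ∧ 16 ∣ s ^ 3 - 3 * s * c4 - 2 * c6)
    (ht : 3 ∣ c4 - t ^ 2 ∧ 3 ∣ t * c4 + c6 ∧ 27 ∣ t ^ 3 - 3 * t * c4 - 2 * c6) :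
    ∃ b : R, 24 ∣ c4 - b ^ 2 ∧ 12 ∣ b * c4 + c6 ∧ 432 ∣ b ^ 3 - 3 * b * c4 - 2 * c6 := by
  obtain ⟨hs₁, hs₂, hs₃⟩ := hs
  obtain ⟨ht₁, ht₂, ht₃⟩ := ht
  obtain ⟨b, hbs, hbt⟩ := exists_dvd_sixteen_sub_and_dvd_twentyseven_sub s t
  have hbs₈ : (8 : R) ∣ b - s := dvd_trans ⟨2, by norm_num⟩ hbs
  have hbs₄ : (4 : R) ∣ b - s := dvd_trans ⟨4, by norm_num⟩ hbs
  have hbt₃ : (3 : R) ∣ b - t := dvd_trans ⟨9, by norm_num⟩ hbt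
  refine ⟨b, ?_, ?_, ?_⟩
  · rw [show (24 : R) = 8 * 3 by norm_num]
    exact IsCoprime.mul_dvd ⟨-1, 3, by norm_num⟩
      (dvd_sub_sq_of_dvd_sub hbs₈ hs₁) (dvd_sub_sq_of_dvd_sub hbt₃ ht₁)
  · rw [show (12 : R) = 4 * 3 by norm_num]
    exact IsCoprime.mul_dvd ⟨1, -1, by norm_num⟩
      (dvd_mul_add_of_dvd_sub hbs₄ hs₂) (dvd_mul_add_of_dvd_sub hbt₃ ht₂)
  · rw [show (432 : R) = 16 * 27 by norm_num]
    exact IsCoprime.mul_dvd ⟨-5, 3, by norm_num⟩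
      (dvd_cubic_of_dvd_sub hbs hs₃) (dvd_cubic_of_dvd_sub hbt ht₃)

end CommRing

section IntPolynomial

variable {σ : Type*}

theorem MvPolynomial.prime_intCast {p : ℤ} (hp : Prime p) : Prime (p : MvPolynomial σ ℤ) := by
  rw [← map_intCast (C : ℤ →+* MvPolynomial σ ℤ)]
  exact (prime_C_iff σ).2 hp

theorem MvPolynomial.not_intCast_dvd_of_forall_dvd_coeff_isUnit {f : MvPolynomial σ ℤ}
    (hf : ∀ n : ℤ, (∀ m, n ∣ coeff m f) → IsUnit n) {p : ℤ} (hp : ¬IsUnit p) :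
    ¬(p : MvPolynomial σ ℤ) ∣ f := by
  rw [← map_intCast (C : ℤ →+* MvPolynomial σ ℤ), C_dvd_iff_dvd_coeff]
  exact fun h => hp (hf p h)

theorem exists_sq_eq_and_eq_mul_of_pow_three_eq_sq {A : Type*} [CommRing A] [IsDomain A]
    [IsIntegrallyClosed A] {a b : A} (h : a ^ 3 = b ^ 2) : ∃ w, w ^ 2 = a ∧ b = a * w := by
  obtain ⟨w, hw⟩ : a ∣ b :=
    (IsIntegrallyClosed.pow_dvd_pow_iff two_ne_zero).1 ⟨a, by rw [← h]; ring⟩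
  rcases eq_or_ne a 0 with rfl | ha
  · exact ⟨0, by simp, by simpa using hw⟩
  refine ⟨w, mul_left_cancel₀ (pow_ne_zero 2 ha) ?_, hw⟩
  linear_combination -h - (b + a * w) * hw

theorem MvPolynomial.exists_dvd_sub_sq_and_dvd_mul_add (p : ℕ) [Fact p.Prime]
    {c4 c6 : MvPolynomial σ ℤ} (h : (p : MvPolynomial σ ℤ) ∣ c4 ^ 3 - c6 ^ 2) :
    ∃ t, (p : MvPolynomial σ ℤ) ∣ c4 - t ^ 2 ∧ (p : MvPolynomial σ ℤ) ∣ t * c4 + c6 := by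
  set π := map (σ := σ) (Int.castRingHom (ZMod p))
  have hdvd (f : MvPolynomial σ ℤ) : (p : MvPolynomial σ ℤ) ∣ f ↔ π f = 0 := by
    rw [← C_dvd_iff_zmod, map_natCast]
  rw [hdvd, map_sub, map_pow, map_pow, sub_eq_zero] at h
  obtain ⟨w, hw, hc6⟩ := exists_sq_eq_and_eq_mul_of_pow_three_eq_sq h
  obtain ⟨t, ht⟩ := map_surjective (Int.castRingHom (ZMod p)) ZMod.intCast_surjective (-w)
  refine ⟨t, ?_, ?_⟩
  · rw [hdvd, map_sub, map_pow, ht, ← hw]; ring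
  · rw [hdvd, map_add, map_mul, ht, hc6]; ring

end IntPolynomial

theorem exists_b2_general {N : ℕ} (c4 c6 Δ : MvPolynomial (Fin N) ℤ)
    (hc4prim : ∀ n : ℤ, (∀ m, n ∣ coeff m c4) → IsUnit n)
    (hΔ : c4 ^ 3 - c6 ^ 2 = 1728 * Δ)
    (ha1 : ∃ a1 : MvPolynomial (Fin N) ℤ,
      (4 : MvPolynomial (Fin N) ℤ) ∣ (a1 ^ 2 * c4 + c6)) :
    ∃ b2 : MvPolynomial (Fin N) ℤ,
      (24 : MvPolynomial (Fin N) ℤ) ∣ (c4 - b2 ^ 2) ∧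
      (12 : MvPolynomial (Fin N) ℤ) ∣ (b2 * c4 + c6) ∧
      (432 : MvPolynomial (Fin N) ℤ) ∣ (b2 ^ 3 - 3 * b2 * c4 - 2 * c6) := by
  have hp2 : Prime (2 : MvPolynomial (Fin N) ℤ) := by exact_mod_cast prime_intCast Int.prime_two
  have hp3 : Prime (3 : MvPolynomial (Fin N) ℤ) := by exact_mod_cast prime_intCast Int.prime_three
  have h2 : ¬(2 : MvPolynomial (Fin N) ℤ) ∣ c4 := by
    exact_mod_cast not_intCast_dvd_of_forall_dvd_coeff_isUnit hc4prim Int.prime_two.not_isUnit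
  have h3 : ¬(3 : MvPolynomial (Fin N) ℤ) ∣ c4 := by
    exact_mod_cast not_intCast_dvd_of_forall_dvd_coeff_isUnit hc4prim Int.prime_three.not_isUnit
  have hD (n : MvPolynomial (Fin N) ℤ) (hn : n ∣ 1728) : n ∣ c4 ^ 3 - c6 ^ 2 :=
    hΔ ▸ hn.mul_right Δ
  obtain ⟨a1, ha1⟩ := ha1
  obtain ⟨t, ht₁, ht₂⟩ := exists_dvd_sub_sq_and_dvd_mul_add 3 (c4 := c4) (c6 := c6)
    (by exact_mod_cast hD 3 ⟨576, by norm_num⟩)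
  push_cast at ht₁ ht₂
  obtain ⟨hs₁, hs₃⟩ :=
    dvd_sub_sq_and_dvd_cubic_of_prime_two hp2 h2 ha1 (hD 64 ⟨27, by norm_num⟩)
  exact exists_of_two_adic_of_three_adic ⟨hs₁, ha1, hs₃⟩
    ⟨ht₁, ht₂, dvd_cubic_of_prime_three hp3 h3 ht₂ (hD 27 ⟨64, by norm_num⟩)⟩

/-- Existence of `b2` with the three congruences, given primitive `c4, c6`
with `c4^3 - c6^2 = 1728 Δ` and some `a1` with `a1^2 c4 + c6 ≡ 0 (mod 4)`. -/
theorem exists_b2 {N : ℕ} (c4 c6 Δ : MvPolynomial (Fin N) ℤ)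
    (hc4prim : ∀ n : ℤ, (∀ m, n ∣ coeff m c4) → IsUnit n)
    (hc6prim : ∀ n : ℤ, (∀ m, n ∣ coeff m c6) → IsUnit n)
    (hΔ : c4 ^ 3 - c6 ^ 2 = 1728 * Δ)
    (ha1 : ∃ a1 : MvPolynomial (Fin N) ℤ,
      (4 : MvPolynomial (Fin N) ℤ) ∣ (a1 ^ 2 * c4 + c6)) :
    ∃ b2 : MvPolynomial (Fin N) ℤ,
      (24 : MvPolynomial (Fin N) ℤ) ∣ (c4 - b2 ^ 2) ∧
      (12 : MvPolynomial (Fin N) ℤ) ∣ (b2 * c4 + c6) ∧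
      (432 : MvPolynomial (Fin N) ℤ) ∣ (b2 ^ 3 - 3 * b2 * c4 - 2 * c6) :=
  exists_b2_general c4 c6 Δ hc4prim hΔ ha1
end

section
/- Let Φ be a 5×5 alternating matrix over a commutative ring and let Pf(Φ) = (p_1,...,p_5) be the row vector where p_i is (-1)^{i-1} times the Pfaffian of the 4×4 submatrix obtained by deleting the i-th row and column of Φ. Then Pf(Φ)·Φ = 0. -/
open Matrix

/-- The Pfaffian of a 4×4 alternating matrix. -/
def pf4 {R : Type*} [CommRing R] (M : Matrix (Fin 4) (Fin 4) R) : R :=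
  M 0 1 * M 2 3 - M 0 2 * M 1 3 + M 0 3 * M 1 2

/-- The vector of signed 4×4 Pfaffians of a 5×5 alternating matrix:
`p i = (-1)^i` times the Pfaffian of the submatrix deleting row/column `i`. -/
def signedPf {R : Type*} [CommRing R] (M : Matrix (Fin 5) (Fin 5) R) (i : Fin 5) : R :=
  (-1 : R) ^ (i : ℕ) * pf4 (M.submatrix i.succAbove i.succAbove)

/-!
An alternating 5×5 matrix is determined by its ten entries above the diagonal. In these
coordinates the signed Pfaffians are explicit quadratic forms, and each entry of `Pf(Φ) · Φ`
is a cubic that cancels identically: it is the expansion along a row of the Pfaffian of a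
6×6 alternating matrix with two equal rows.
-/

section

variable {R : Type*} [CommRing R]

def alternating5 (a b c d e f g h k l : R) : Matrix (Fin 5) (Fin 5) R :=
  !![0, a, b, c, d;
    -a, 0, e, f, g;
    -b, -e, 0, h, k;
    -c, -f, -h, 0, l;
    -d, -g, -k, -l, 0]

theorem eq_alternating5 {Φ : Matrix (Fin 5) (Fin 5) R} (halt : Φᵀ = -Φ)
    (hdiag : ∀ i, Φ i i = 0) :
    Φ = alternating5 (Φ 0 1) (Φ 0 2) (Φ 0 3) (Φ 0 4) (Φ 1 2) (Φ 1 3) (Φ 1 4) (Φ 2 3) (Φ 2 4)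
      (Φ 3 4) := by
  have hskew : ∀ i j, Φ j i = -Φ i j := fun i j => by
    simpa using congrFun (congrFun halt i) j
  ext i j
  fin_cases i <;> fin_cases j <;> simp [alternating5, hdiag] <;> exact hskew _ _

theorem signedPf_alternating5 (a b c d e f g h k l : R) :
    signedPf (alternating5 a b c d e f g h k l) =
      ![e * l - f * k + g * h, -(b * l - c * k + d * h), a * l - c * g + d * f,
        -(a * k - b * g + d * e), a * h - b * f + c * e] := by
  ext i
  fin_cases i <;> simp [signedPf, pf4, alternating5, Fin.succAbove] <;> ring

theorem signedPf_vecMul_alternating5 (a b c d e f g h k l : R) :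
    signedPf (alternating5 a b c d e f g h k l) ᵥ* alternating5 a b c d e f g h k l = 0 := by
  rw [signedPf_alternating5]
  ext j
  fin_cases j <;> simp [vecMul, dotProduct, Fin.sum_univ_five, alternating5] <;> ring

end

/-- For a 5×5 alternating matrix `Φ`, the row vector of signed 4×4
Pfaffians satisfies `Pf(Φ) · Φ = 0`. -/
theorem signedPf_vecMul_eq_zero {R : Type*} [CommRing R]
    (Φ : Matrix (Fin 5) (Fin 5) R) (halt : Φᵀ = -Φ) (hdiag : ∀ i, Φ i i = 0) :
    ∀ j, (∑ i, signedPf Φ i * Φ i j) = 0 := by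
  intro j
  rw [eq_alternating5 halt hdiag]
  exact congrFun (signedPf_vecMul_alternating5 ..) j
end

section
/- Let Φ be a 5×5 alternating matrix over a commutative ring and A a 5×5 matrix. Then Pf(AΦA^T) = Pf(Φ)·adj(A), where adj(A) is the adjugate matrix and Pf is the vector of signed 4×4 Pfaffians. -/
/-!
Deleting row `j` of `A` leaves a `4 × 5` matrix `B`, and the `j`-th signed Pfaffian of `A Φ Aᵀ`
is `± pf4 (B Φ Bᵀ)`. By the minor summation formula for Pfaffians (here a polynomial identity
in the entries of `B` and `Φ`, checked by expansion),
`pf4 (B Φ Bᵀ) = ∑ₖ pf4 (Φ without row and column k) · det (B without column k)`, and the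
maximal minors of `B` are, up to the signs that `signedPf` accounts for, the cofactors
`adj(A) k j`.
-/

open Matrix

theorem submatrix_mul_mul_transpose {l m n R : Type*} [Semiring R] [Fintype n]
    (A : Matrix m n R) (Φ : Matrix n n R) (f : l → m) :
    (A * Φ * Aᵀ).submatrix f f = A.submatrix f id * Φ * (A.submatrix f id)ᵀ := by
  rw [submatrix_mul _ _ _ id _ Function.bijective_id, submatrix_mul _ _ _ id _ Function.bijective_id,
    transpose_submatrix]
  rfl

theorem eq_of_alternating_fin_five {R : Type*} [CommRing R] {Φ : Matrix (Fin 5) (Fin 5) R}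
    (halt : Φᵀ = -Φ) (hdiag : ∀ i, Φ i i = 0) :
    Φ = !![0, Φ 0 1, Φ 0 2, Φ 0 3, Φ 0 4;
          -Φ 0 1, 0, Φ 1 2, Φ 1 3, Φ 1 4;
          -Φ 0 2, -Φ 1 2, 0, Φ 2 3, Φ 2 4;
          -Φ 0 3, -Φ 1 3, -Φ 2 3, 0, Φ 3 4;
          -Φ 0 4, -Φ 1 4, -Φ 2 4, -Φ 3 4, 0] := by
  have hskew i j : Φ j i = -Φ i j := by simpa using congrFun₂ halt i j
  ext i j
  fin_cases i <;> fin_cases j <;> simp [hdiag] <;> exact hskew _ _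

theorem pf4_mul_mul_transpose {R : Type*} [CommRing R] (B : Matrix (Fin 4) (Fin 5) R)
    (Φ : Matrix (Fin 5) (Fin 5) R) (halt : Φᵀ = -Φ) (hdiag : ∀ i, Φ i i = 0) :
    pf4 (B * Φ * Bᵀ) =
      ∑ k : Fin 5, pf4 (Φ.submatrix k.succAbove k.succAbove) * (B.submatrix id k.succAbove).det := by
  rw [eq_of_alternating_fin_five halt hdiag]
  simp only [pf4, Fin.isValue, mul_apply, of_apply, cons_val', cons_val_fin_one, Fin.sum_univ_succ,
    cons_val_zero, cons_val_succ, Fin.succ_zero_eq_one, Fin.succ_one_eq_two, Fin.reduceSucc,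
    Finset.univ_unique, Fin.default_eq_zero, Finset.sum_singleton, transpose_apply, mul_zero,
    mul_neg, zero_add, add_zero, submatrix_apply, Fin.succAbove, Nat.reduceAdd, Fin.castSucc_zero,
    Fin.castSucc_one, Fin.reduceCastSucc, det_succ_row_zero, Nat.succ_eq_add_one, id_eq,
    submatrix_submatrix, CompTriple.comp_eq, Function.comp_apply, det_unique,
    Fin.coe_ofNat_eq_mod, Nat.zero_mod, pow_zero, one_mul, lt_self_iff_false, ↓reduceIte,
    Fin.val_succ, Fin.val_eq_zero, pow_one, Fin.castSucc_succ, neg_mul, Fin.succ_pos,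
    Finset.sum_neg_distrib, not_lt_zero, even_two, Even.neg_pow, one_pow, Fin.reduceLT,
    Fin.lt_one_iff, Fin.reduceEq, cons_val, cons_val_one]
  ring

/-- `Pf(A Φ Aᵀ) = Pf(Φ) · adj(A)` for a 5×5 alternating `Φ` and any 5×5 `A`. -/
theorem signedPf_conj {R : Type*} [CommRing R]
    (Φ A : Matrix (Fin 5) (Fin 5) R) (halt : Φᵀ = -Φ) (hdiag : ∀ i, Φ i i = 0) :
    ∀ j, signedPf (A * Φ * Aᵀ) j = ∑ i, signedPf Φ i * A.adjugate i j := by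
  intro j
  rw [signedPf, submatrix_mul_mul_transpose, pf4_mul_mul_transpose _ _ halt hdiag, Finset.mul_sum]
  refine Finset.sum_congr rfl fun k _ => ?_
  rw [signedPf, adjugate_fin_succ_eq_det_submatrix, submatrix_submatrix, Function.comp_id,
    Function.id_comp, pow_add]
  have hsign : ((-1 : R) ^ (k : ℕ)) ^ 2 = 1 := by rw [← pow_mul, pow_mul', neg_one_sq, one_pow]
  linear_combination (-(-1) ^ (j : ℕ) * pf4 (Φ.submatrix k.succAbove k.succAbove) *
    (A.submatrix j.succAbove k.succAbove).det) * hsign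
end

section
/- Define the set of weights W = {(r,s) ∈ ℤ^5 × ℤ^5 : r_1 ≤ ... ≤ r_5, s_1 ≤ ... ≤ s_5, 2·Σr_i = 1 + Σs_i}. Say (r,s) dominates (r',s') if max(r_i + r_j - s_k, 0) ≥ max(r'_i + r'_j - s'_k, 0) for all 1 ≤ i < j ≤ 5 and 1 ≤ k ≤ 5. Then every weight (r,s) ∈ W with r_1 + r_4 ≤ s_1 and r_2 + r_3 ≤ s_1 dominates one of the seven weights w_1 = (0,0,0,0,1;0,0,0,0,1), w_2 = (0,0,1,1,1;1,1,1,1,1), w_3 = (0,0,1,1,2;1,1,1,2,2), w_4 = (0,1,1,2,2;2,2,2,2,3), w_5 = (0,1,1,2,3;2,2,2,3,4), w_6 = (0,1,1,2,3;2,2,3,3,3), w_7 = (0,1,2,3,4;3,3,4,4,5). -/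
/-- `(r,s)` is a weight: both tuples are increasing and `2Σr = 1 + Σs`. -/
def IsWeight (r s : Fin 5 → ℤ) : Prop :=
  Monotone r ∧ Monotone s ∧ 2 * ∑ i, r i = 1 + ∑ i, s i

/-- `(r,s)` dominates `(r',s')`. -/
def Dominates (r s r' s' : Fin 5 → ℤ) : Prop :=
  ∀ i j k : Fin 5, i < j →
    max (r' i + r' j - s' k) 0 ≤ max (r i + r j - s k) 0

/-!
For increasing `r` and `s`, the quantity `r i + r j - s k` grows with `i` and `j` and decreases
with `k`. So `(r,s)` dominates a weight `(r',s')` as soon as `r' i + r' j - s' k ≤ r i + r j - s k`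
for the triples `(i,j,k)` that are minimal in this order among those with
`r' i + r' j - s' k > 0`; for the seven weights these are the hypotheses of `dominates_w1`, ...,
`dominates_w7`. Comparing `r 0 + r 4`, `r 1 + r 3`, `r 2 + r 3` and `r 1 + r 4` with the `s k`,
the relation `2Σr = 1 + Σs` and the bounds `r 0 + r 3, r 1 + r 2 ≤ s 0` force one of these seven
lists of conditions to hold.
-/

theorem Monotone.fin_five {α : Type*} [Preorder α] {f : Fin 5 → α} (hf : Monotone f) :
    f 0 ≤ f 1 ∧ f 1 ≤ f 2 ∧ f 2 ≤ f 3 ∧ f 3 ≤ f 4 :=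
  ⟨hf (by decide), hf (by decide), hf (by decide), hf (by decide)⟩

section Generators

variable {r s : Fin 5 → ℤ}

theorem dominates_w1 (hr : Monotone r) (hs : Monotone s)
    (h04s3 : s 3 + 1 ≤ r 0 + r 4) :
    Dominates r s ![0,0,0,0,1] ![0,0,0,0,1] := by
  have := hr.fin_five; have := hs.fin_five
  intro i j k hij
  fin_cases i <;> fin_cases j <;> (try simp at hij) <;> fin_cases k <;> simp <;> omega

theorem dominates_w2 (hr : Monotone r) (hs : Monotone s)
    (h23s4 : s 4 + 1 ≤ r 2 + r 3) :
    Dominates r s ![0,0,1,1,1] ![1,1,1,1,1] := by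
  have := hr.fin_five; have := hs.fin_five
  intro i j k hij
  fin_cases i <;> fin_cases j <;> (try simp at hij) <;> fin_cases k <;> simp <;> omega

theorem dominates_w3 (hr : Monotone r) (hs : Monotone s)
    (h04s2 : s 2 + 1 ≤ r 0 + r 4) (h23s2 : s 2 + 1 ≤ r 2 + r 3)
    (h24s2 : s 2 + 2 ≤ r 2 + r 4) (h24s4 : s 4 + 1 ≤ r 2 + r 4) :
    Dominates r s ![0,0,1,1,2] ![1,1,1,2,2] := by
  have := hr.fin_five; have := hs.fin_five
  intro i j k hij
  fin_cases i <;> fin_cases j <;> (try simp at hij) <;> fin_cases k <;> simp <;> omega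

theorem dominates_w4 (hr : Monotone r) (hs : Monotone s)
    (h13s3 : s 3 + 1 ≤ r 1 + r 3) (h34s3 : s 3 + 2 ≤ r 3 + r 4)
    (h34s4 : s 4 + 1 ≤ r 3 + r 4) :
    Dominates r s ![0,1,1,2,2] ![2,2,2,2,3] := by
  have := hr.fin_five; have := hs.fin_five
  intro i j k hij
  fin_cases i <;> fin_cases j <;> (try simp at hij) <;> fin_cases k <;> simp <;> omega

theorem dominates_w5 (hr : Monotone r) (hs : Monotone s)
    (h04s2 : s 2 + 1 ≤ r 0 + r 4) (h13s2 : s 2 + 1 ≤ r 1 + r 3)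
    (h14s2 : s 2 + 2 ≤ r 1 + r 4) (h14s3 : s 3 + 1 ≤ r 1 + r 4)
    (h34s2 : s 2 + 3 ≤ r 3 + r 4) (h34s3 : s 3 + 2 ≤ r 3 + r 4) (h34s4 : s 4 + 1 ≤ r 3 + r 4) :
    Dominates r s ![0,1,1,2,3] ![2,2,2,3,4] := by
  have := hr.fin_five; have := hs.fin_five
  intro i j k hij
  fin_cases i <;> fin_cases j <;> (try simp at hij) <;> fin_cases k <;> simp <;> omega

theorem dominates_w6 (hr : Monotone r) (hs : Monotone s)
    (h04s1 : s 1 + 1 ≤ r 0 + r 4) (h13s1 : s 1 + 1 ≤ r 1 + r 3)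
    (h14s1 : s 1 + 2 ≤ r 1 + r 4) (h14s4 : s 4 + 1 ≤ r 1 + r 4)
    (h34s1 : s 1 + 3 ≤ r 3 + r 4) (h34s4 : s 4 + 2 ≤ r 3 + r 4) :
    Dominates r s ![0,1,1,2,3] ![2,2,3,3,3] := by
  have := hr.fin_five; have := hs.fin_five
  intro i j k hij
  fin_cases i <;> fin_cases j <;> (try simp at hij) <;> fin_cases k <;> simp <;> omega

theorem dominates_w7 (hs : Monotone s)
    (h04s1 : s 1 + 1 ≤ r 0 + r 4) (h13s1 : s 1 + 1 ≤ r 1 + r 3)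
    (h14s1 : s 1 + 2 ≤ r 1 + r 4) (h14s3 : s 3 + 1 ≤ r 1 + r 4)
    (h23s1 : s 1 + 2 ≤ r 2 + r 3) (h23s3 : s 3 + 1 ≤ r 2 + r 3)
    (h24s1 : s 1 + 3 ≤ r 2 + r 4) (h24s3 : s 3 + 2 ≤ r 2 + r 4) (h24s4 : s 4 + 1 ≤ r 2 + r 4)
    (h34s1 : s 1 + 4 ≤ r 3 + r 4) (h34s3 : s 3 + 3 ≤ r 3 + r 4) (h34s4 : s 4 + 2 ≤ r 3 + r 4) :
    Dominates r s ![0,1,2,3,4] ![3,3,4,4,5] := by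
  have := hs.fin_five
  intro i j k hij
  fin_cases i <;> fin_cases j <;> (try simp at hij) <;> fin_cases k <;> simp <;> omega

end Generators

/-- Every weight `(r,s)` with `r₁+r₄ ≤ s₁` and `r₂+r₃ ≤ s₁` dominates one of
the seven listed weights. -/
theorem weight_dominates_one_of_seven (r s : Fin 5 → ℤ)
    (hw : IsWeight r s) (h14 : r 0 + r 3 ≤ s 0) (h23 : r 1 + r 2 ≤ s 0) :
    ∃ w ∈ [((![0,0,0,0,1], ![0,0,0,0,1]) : (Fin 5 → ℤ) × (Fin 5 → ℤ)),
           (![0,0,1,1,1], ![1,1,1,1,1]),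
           (![0,0,1,1,2], ![1,1,1,2,2]),
           (![0,1,1,2,2], ![2,2,2,2,3]),
           (![0,1,1,2,3], ![2,2,2,3,4]),
           (![0,1,1,2,3], ![2,2,3,3,3]),
           (![0,1,2,3,4], ![3,3,4,4,5])],
      Dominates r s w.1 w.2 := by
  obtain ⟨hr, hs, hsum⟩ := hw
  rw [Fin.sum_univ_five, Fin.sum_univ_five] at hsum
  have := hr.fin_five; have := hs.fin_five
  rcases le_or_gt (s 3 + 1) (r 0 + r 4) with h04s3 | h04s3
  · exact ⟨(![0,0,0,0,1], ![0,0,0,0,1]), by simp, dominates_w1 hr hs h04s3⟩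
  rcases le_or_gt (s 4 + 1) (r 2 + r 3) with h23s4 | h23s4
  · exact ⟨(![0,0,1,1,1], ![1,1,1,1,1]), by simp, dominates_w2 hr hs h23s4⟩
  rcases le_or_gt (s 2 + 1) (r 0 + r 4) with h04s2 | h04s2
  · rcases le_or_gt (s 2 + 1) (r 1 + r 3) with h13s2 | h13s2
    · rcases le_or_gt (s 3 + 1) (r 1 + r 4) with h14s3 | h14s3
      · refine ⟨(![0,1,1,2,3], ![2,2,2,3,4]), by simp,
          dominates_w5 hr hs h04s2 h13s2 ?_ h14s3 ?_ ?_ ?_⟩ <;> omega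
      · refine ⟨(![0,0,1,1,2], ![1,1,1,2,2]), by simp,
          dominates_w3 hr hs h04s2 ?_ ?_ ?_⟩ <;> omega
    rcases le_or_gt (s 2 + 1) (r 2 + r 3) with h23s2 | h23s2
    · refine ⟨(![0,0,1,1,2], ![1,1,1,2,2]), by simp,
        dominates_w3 hr hs h04s2 h23s2 ?_ ?_⟩ <;> omega
    · refine ⟨(![0,1,1,2,3], ![2,2,3,3,3]), by simp,
        dominates_w6 hr hs ?_ ?_ ?_ ?_ ?_ ?_⟩ <;> omega
  rcases le_or_gt (s 3 + 1) (r 1 + r 3) with h13s3 | h13s3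
  · refine ⟨(![0,1,1,2,2], ![2,2,2,2,3]), by simp,
      dominates_w4 hr hs h13s3 ?_ ?_⟩ <;> omega
  rcases le_or_gt (s 4 + 1) (r 1 + r 4) with h14s4 | h14s4
  · refine ⟨(![0,1,1,2,3], ![2,2,3,3,3]), by simp,
      dominates_w6 hr hs ?_ ?_ ?_ h14s4 ?_ ?_⟩ <;> omega
  · refine ⟨(![0,1,2,3,4], ![3,3,4,4,5]), by simp,
      dominates_w7 hs ?_ ?_ ?_ ?_ ?_ ?_ ?_ ?_ ?_ ?_ ?_ ?_⟩ <;> omega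
end

section
/- Let k be a field of characteristic not equal to 5. Then the polynomials c4(λ,μ) = λ^4 + 228λ^3μ + 494λ^2μ^2 - 228λμ^3 + μ^4 and Δ(λ,μ) = λμ(λ^2 - 11λμ - μ^2)^5 have no common nonzero root in k^2; equivalently, if (λ,μ) ∈ k^2 with (λ,μ) ≠ (0,0) satisfies c4(λ,μ) = 0 and Δ(λ,μ) = 0, then char(k) = 5. -/
/-!
Write `q = λ² - 11λμ - μ²`, so that `Δ = λμq⁵`. The ideal `(c4, q)` contains `5⁵μ⁵` (a
resultant identity), so away from characteristic 5 the forms `c4` and `q` have no common nonzero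
root, and `c4(0, μ) = μ⁴` does the same for the factor `λ`. The substitution `(λ, μ) ↦ (μ, -λ)`
fixes `c4` and `Δ` and exchanges the roles of the coordinates, which handles `μ` and the factor `μ`.
-/

namespace GenusOneDegreeFive

variable {R : Type*} [CommRing R]

def c4 (l m : R) : R :=
  l ^ 4 + 228 * l ^ 3 * m + 494 * l ^ 2 * m ^ 2 - 228 * l * m ^ 3 + m ^ 4

def q (l m : R) : R := l ^ 2 - 11 * l * m - m ^ 2

def delta (l m : R) : R := l * m * q l m ^ 5

theorem c4_swap (l m : R) : c4 m (-l) = c4 l m := by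
  unfold c4; ring

theorem delta_swap (l m : R) : delta m (-l) = delta l m := by
  unfold delta q; ring

theorem c4_zero_left (m : R) : c4 0 m = m ^ 4 := by
  unfold c4; ring

theorem five_pow_five_mul_pow_five_eq (l m : R) :
    5 ^ 5 * m ^ 5 = (122 * m - 11 * l) * c4 l m
      + (121 * 5 ^ 5 * m ^ 3 + (l ^ 2 + 239 * l * m + 3124 * m ^ 2) * (11 * l - 122 * m))
        * q l m := by
  unfold c4 q; ring

variable [NoZeroDivisors R]

theorem right_eq_zero_of_c4_eq_zero_of_left_eq_zero {l m : R} (hc4 : c4 l m = 0) (hl : l = 0) :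
    m = 0 := by
  rw [hl, c4_zero_left] at hc4
  exact pow_eq_zero_iff (by norm_num) |>.mp hc4

theorem right_eq_zero_of_c4_eq_zero_of_q_eq_zero {l m : R} (h5 : (5 : R) ≠ 0)
    (hc4 : c4 l m = 0) (hq : q l m = 0) : m = 0 := by
  have h : (5 : R) ^ 5 * m ^ 5 = 0 := by
    rw [five_pow_five_mul_pow_five_eq l m, hc4, hq]; ring
  exact pow_eq_zero_iff (by norm_num) |>.mp ((mul_eq_zero.mp h).resolve_left (pow_ne_zero 5 h5))

theorem right_eq_zero_of_c4_eq_zero_of_delta_eq_zero {l m : R} (h5 : (5 : R) ≠ 0)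
    (hc4 : c4 l m = 0) (hΔ : delta l m = 0) : m = 0 := by
  rcases mul_eq_zero.mp hΔ with hlm | hq
  · rcases mul_eq_zero.mp hlm with hl | hm
    · exact right_eq_zero_of_c4_eq_zero_of_left_eq_zero hc4 hl
    · exact hm
  · exact right_eq_zero_of_c4_eq_zero_of_q_eq_zero h5 hc4
      (pow_eq_zero_iff (by norm_num) |>.mp hq)

theorem five_eq_zero_of_c4_eq_zero_of_delta_eq_zero {l m : R} (h0 : ¬(l = 0 ∧ m = 0))
    (hc4 : c4 l m = 0) (hΔ : delta l m = 0) : (5 : R) = 0 := by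
  by_contra h5
  have hm := right_eq_zero_of_c4_eq_zero_of_delta_eq_zero h5 hc4 hΔ
  have hl := right_eq_zero_of_c4_eq_zero_of_delta_eq_zero h5
    ((c4_swap l m).trans hc4) ((delta_swap l m).trans hΔ)
  exact h0 ⟨neg_eq_zero.mp hl, hm⟩

end GenusOneDegreeFive

open GenusOneDegreeFive in
/-- If a nonzero `(λ,μ) ∈ k²` is a common root of
`c4(λ,μ) = λ⁴ + 228λ³μ + 494λ²μ² - 228λμ³ + μ⁴` and
`Δ(λ,μ) = λμ(λ² - 11λμ - μ²)⁵`, then `char k = 5`. -/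
theorem common_root_implies_char_five {k : Type*} [Field k] (l m : k)
    (h0 : ¬(l = 0 ∧ m = 0))
    (hc4 : l ^ 4 + 228 * l ^ 3 * m + 494 * l ^ 2 * m ^ 2
      - 228 * l * m ^ 3 + m ^ 4 = 0)
    (hΔ : l * m * (l ^ 2 - 11 * l * m - m ^ 2) ^ 5 = 0) :
    ringChar k = 5 := by
  have h5 : (5 : k) = 0 := five_eq_zero_of_c4_eq_zero_of_delta_eq_zero h0 hc4 hΔ
  exact CharP.ringChar_of_prime_eq_zero Nat.prime_five (by exact_mod_cast h5)
end

section
/- Let Φ be the 5×5 alternating matrix of linear forms over ℚ with Φ_{12} = x_1, Φ_{13} = 0, Φ_{14} = x_2, Φ_{15} = x_3, Φ_{23} = x_2, Φ_{24} = x_3, Φ_{25} = x_4, Φ_{34} = x_4, Φ_{35} = x_5, Φ_{45} = 0. Then for all (s:t), the point (x_1,x_2,x_3,x_4,x_5) = (-s^5, s^3t^2, s^2t^3, st^4, t^5) makes all five signed 4×4 Pfaffians of Φ vanish. -/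
theorem signedPf_eq {R : Type*} [CommRing R] (M : Matrix (Fin 5) (Fin 5) R) :
    signedPf M = ![M 1 2 * M 3 4 - M 1 3 * M 2 4 + M 1 4 * M 2 3,
      -(M 0 2 * M 3 4 - M 0 3 * M 2 4 + M 0 4 * M 2 3),
      M 0 1 * M 3 4 - M 0 3 * M 1 4 + M 0 4 * M 1 3,
      -(M 0 1 * M 2 4 - M 0 2 * M 1 4 + M 0 4 * M 1 2),
      M 0 1 * M 2 3 - M 0 2 * M 1 3 + M 0 3 * M 1 2] := by
  ext i
  fin_cases i <;>
    simp +decide only [signedPf, pf4, Matrix.submatrix_apply, Fin.succAbove, ↓reduceIte,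
      Fin.reduceSucc, Fin.reduceCastSucc, Fin.reduceFinMk, Fin.zero_eta, Fin.mk_one,
      Matrix.cons_val, Matrix.cons_val_zero, Matrix.cons_val_one] <;>
    ring

/-- The cuspidal quintic `(s:t) ↦ (-s⁵ : s³t² : s²t³ : st⁴ : t⁵)` lies on the
curve cut out by the 4×4 Pfaffians of the model with
`Φ₁₂ = x₁, Φ₁₄ = x₂, Φ₁₅ = x₃, Φ₂₃ = x₂, Φ₂₄ = x₃, Φ₂₅ = x₄, Φ₃₄ = x₄,
Φ₃₅ = x₅` and `Φ₁₃ = Φ₄₅ = 0`. -/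
theorem cuspidal_parametrisation (s t : ℚ) :
    ∀ i : Fin 5,
      signedPf
        (let x1 : ℚ := -s ^ 5
         let x2 : ℚ := s ^ 3 * t ^ 2
         let x3 : ℚ := s ^ 2 * t ^ 3
         let x4 : ℚ := s * t ^ 4
         let x5 : ℚ := t ^ 5
         !![0, x1, 0, x2, x3;
            -x1, 0, x2, x3, x4;
            0, -x2, 0, x4, x5;
            -x2, -x3, -x4, 0, 0;
            -x3, -x4, -x5, 0, 0]) i = 0 := by
  intro i
  rw [signedPf_eq]
  fin_cases i <;>
    simp only [Matrix.of_apply, Matrix.cons_val, Fin.reduceFinMk, Fin.zero_eta, Fin.mk_one,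
      Matrix.cons_val_zero, Matrix.cons_val_one] <;>
    ring
end

section
/- Let k be an algebraically closed field and ψ a 3×2 matrix of linear forms in k[x_1,x_2,x_3,x_4] whose three 2×2 minors are linearly independent and such that no nonzero linear combination of the minors is a quadratic form of rank 1. If the scheme Γ = {rank ψ ≤ 1} ⊂ P^3 has a point P where ψ(P) = 0, then for every other point Q ∈ Γ, ψ(Q) has rank exactly 1. -/
/-!
If ψ(P) = 0 and also ψ(Q) = 0 for a point Q ≠ P, then every entry of ψ is a linear form vanishing
on the line PQ, so all entries lie in a pencil ⟨ℓ₁, ℓ₂⟩ and the three minors lie in the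
space ⟨ℓ₁², ℓ₁ℓ₂, ℓ₂²⟩ of dimension at most 3. Being linearly independent, the minors span it,
so the square ℓ₁² is a nonzero combination of the minors, which is excluded. Hence ψ(Q) ≠ 0,
and since its 2 × 2 minors vanish, ψ(Q) has rank one.
-/

open MvPolynomial

theorem Matrix.rank_eq_one_of_ne_zero_of_forall_mul_eq {K m n : Type*} [Field K] [Fintype m]
    [Fintype n] {A : Matrix m n K} (hA : A ≠ 0)
    (hminors : ∀ a b i j, A a i * A b j = A a j * A b i) : A.rank = 1 := by
  obtain ⟨a, i, hai⟩ : ∃ a i, A a i ≠ 0 := by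
    by_contra! h
    exact hA (Matrix.ext h)
  have hA_eq : A = vecMulVec (fun b => A b i) (fun j => A a j / A a i) := by
    ext b j
    rw [vecMulVec_apply, mul_div_assoc', eq_div_iff hai, hminors]
  have hle := rank_vecMulVec_le (fun b => A b i) (fun j => A a j / A a i)
  rw [← hA_eq] at hle
  have hne : A.rank ≠ 0 := by
    classical
    rw [Matrix.rank, Ne, Submodule.finrank_eq_zero, LinearMap.range_eq_bot]
    exact fun h => hA (Matrix.toLin'.injective (by rw [map_zero]; exact h))
  omega

theorem mul_eq_mul_of_cyclic_minors_eq_zero {R : Type*} [CommRing R]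
    {A : Matrix (Fin 3) (Fin 2) R}
    (h : ∀ i : Fin 3, A (i + 1) 0 * A (i + 2) 1 - A (i + 1) 1 * A (i + 2) 0 = 0) :
    ∀ a b i j, A a i * A b j = A a j * A b i := by
  have h0 := h 0
  have h1 := h 1
  have h2 := h 2
  simp only [Fin.isValue, Fin.reduceAdd, zero_add] at h0 h1 h2
  intro a b i j
  fin_cases a <;> fin_cases b <;> fin_cases i <;> fin_cases j <;>
    simp only [Fin.zero_eta, Fin.mk_one, Fin.reduceFinMk, Fin.isValue] <;>
    first
      | ring1
      | linear_combination h0 | linear_combination -h0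
      | linear_combination h1 | linear_combination -h1
      | linear_combination h2 | linear_combination -h2

theorem LinearIndependent.span_range_eq_of_subset {K V ι : Type*} [Field K] [AddCommGroup V]
    [Module K V] [Fintype ι] {v w : ι → V} (hv : LinearIndependent K v)
    (hvw : Set.range v ⊆ Submodule.span K (Set.range w)) :
    Submodule.span K (Set.range v) = Submodule.span K (Set.range w) :=
  have := FiniteDimensional.span_of_finite K (Set.finite_range w)
  Submodule.eq_of_le_of_finrank_le (Submodule.span_le.2 hvw)
    ((finrank_range_le_card w).trans (finrank_span_eq_card hv).ge)

theorem mul_mem_span_range_of_mem_span_pair {R A : Type*} [CommSemiring R] [CommSemiring A]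
    [Algebra R A] {a b x y : A} (hx : x ∈ Submodule.span R {a, b})
    (hy : y ∈ Submodule.span R {a, b}) :
    x * y ∈ Submodule.span R (Set.range ![a * a, a * b, b * b]) := by
  obtain ⟨α, β, rfl⟩ := Submodule.mem_span_pair.1 hx
  obtain ⟨γ, δ, rfl⟩ := Submodule.mem_span_pair.1 hy
  refine (Submodule.mem_span_range_iff_exists_fun R).2 ⟨![α * γ, α * δ + β * γ, β * δ], ?_⟩
  simp only [Fin.sum_univ_three, Matrix.cons_val_zero, Matrix.cons_val_one, Matrix.cons_val_two,
    Matrix.head_cons, Matrix.tail_cons, Algebra.smul_def, map_add, map_mul]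
  ring

theorem exists_ne_zero_sum_smul_eq_sq {K A : Type*} [Field K] [CommRing A] [NoZeroDivisors A]
    [Algebra K A] {q : Fin 3 → A} (hq : LinearIndependent K q) {a b : A} (ha : a ≠ 0)
    (hmem : ∀ i, q i ∈ Submodule.span K (Set.range ![a * a, a * b, b * b])) :
    ∃ c : Fin 3 → K, c ≠ 0 ∧ ∑ i, c i • q i = a ^ 2 := by
  have hsq : a ^ 2 ∈ Submodule.span K (Set.range q) := by
    rw [hq.span_range_eq_of_subset (Set.range_subset_iff.2 hmem), sq]
    exact Submodule.subset_span ⟨0, rfl⟩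
  obtain ⟨c, hc⟩ := (Submodule.mem_span_range_iff_exists_fun K).1 hsq
  refine ⟨c, ?_, hc⟩
  rintro rfl
  simp only [Pi.zero_apply, zero_smul, Finset.sum_const_zero] at hc
  exact pow_ne_zero 2 ha hc.symm

theorem eval_linearCombination_X {R σ : Type*} [CommSemiring R] [Fintype σ] (a x : σ → R) :
    eval x (Fintype.linearCombination R X a) = x ⬝ᵥ a := by
  simp [Fintype.linearCombination_apply, dotProduct, smul_eq_C_mul, mul_comm]

theorem isHomogeneous_one_iff_mem_range_linearCombination_X {R σ : Type*} [CommSemiring R]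
    [Fintype σ] {p : MvPolynomial σ R} :
    p.IsHomogeneous 1 ↔ p ∈ LinearMap.range (Fintype.linearCombination R (X : σ → _)) := by
  rw [Fintype.range_linearCombination, ← homogeneousSubmodule_one_eq_span_X,
    mem_homogeneousSubmodule]

theorem exists_pencil_of_linearIndependent {K : Type*} [Field K] {P Q : Fin 4 → K}
    (hPQ : LinearIndependent K ![Q, P]) :
    ∃ ℓ₁ ℓ₂ : MvPolynomial (Fin 4) K, ℓ₁.IsHomogeneous 1 ∧ ℓ₁ ≠ 0 ∧
      ∀ p : MvPolynomial (Fin 4) K, p.IsHomogeneous 1 → eval P p = 0 → eval Q p = 0 →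
        p ∈ Submodule.span K {ℓ₁, ℓ₂} := by
  set L := Fintype.linearCombination K (X : Fin 4 → MvPolynomial (Fin 4) K)
  set M : Matrix (Fin 2) (Fin 4) K := Matrix.of ![Q, P]
  set W := LinearMap.ker M.mulVecLin
  have hW : Module.finrank K W = 2 := by
    have hrank : M.rank = 2 := by
      rw [Matrix.rank_eq_finrank_span_row]
      exact (finrank_span_eq_card hPQ).trans (Fintype.card_fin 2)
    have := LinearMap.finrank_range_add_finrank_ker M.mulVecLin
    rw [Module.finrank_fin_fun, ← Matrix.rank, hrank] at this
    change _ + Module.finrank K W = 4 at this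
    omega
  let b := Module.finBasisOfFinrankEq K W hW
  refine ⟨L (b 0), L (b 1),
    isHomogeneous_one_iff_mem_range_linearCombination_X.2 ⟨_, rfl⟩, ?_, ?_⟩
  · exact fun h => b.ne_zero 0 <| Subtype.ext <|
      (linearIndependent_X (R := K) (σ := Fin 4)).fintypeLinearCombination_injective
        (h.trans (map_zero L).symm)
  · intro p hp hP hQ
    obtain ⟨a, rfl⟩ := isHomogeneous_one_iff_mem_range_linearCombination_X.1 hp
    have ha : a ∈ W := by
      ext i
      fin_cases i
      · simpa [M, eval_linearCombination_X, Matrix.mulVec] using hQ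
      · simpa [M, eval_linearCombination_X, Matrix.mulVec] using hP
    refine Submodule.mem_span_pair.2 ⟨b.repr ⟨a, ha⟩ 0, b.repr ⟨a, ha⟩ 1, ?_⟩
    rw [← map_smul, ← map_smul, ← map_add]
    congr 1
    simpa only [Fin.sum_univ_two, Submodule.coe_add, Submodule.coe_smul] using
      congrArg Subtype.val (b.sum_repr ⟨a, ha⟩)

theorem rank_one_at_other_points_general {k : Type*} [Field k]
    (ψ : Matrix (Fin 3) (Fin 2) (MvPolynomial (Fin 4) k))
    (hlin : ∀ i j, (ψ i j).IsHomogeneous 1)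
    (minor : Fin 3 → MvPolynomial (Fin 4) k)
    (hminor : minor = fun i =>
      ψ (i + 1) 0 * ψ (i + 2) 1 - ψ (i + 1) 1 * ψ (i + 2) 0)
    (hindep : ∀ c : Fin 3 → k, (∑ i, C (c i) * minor i) = 0 → c = 0)
    (hrank1 : ∀ c : Fin 3 → k, c ≠ 0 →
      ¬ ∃ ℓ : MvPolynomial (Fin 4) k, ℓ.IsHomogeneous 1 ∧
        (∑ i, C (c i) * minor i) = ℓ ^ 2)
    (P : Fin 4 → k) (hP : P ≠ 0) (hψP : ∀ i j, eval P (ψ i j) = 0)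
    (Q : Fin 4 → k) (hPQ : ¬ ∃ c : k, Q = c • P)
    (hQΓ : ∀ i, eval Q (minor i) = 0) :
    (Matrix.of fun i j => eval Q (ψ i j)).rank = 1 := by
  refine Matrix.rank_eq_one_of_ne_zero_of_forall_mul_eq ?_
    (mul_eq_mul_of_cyclic_minors_eq_zero fun i => by simpa [hminor] using hQΓ i)
  intro hψQ
  obtain ⟨ℓ₁, ℓ₂, hℓ₁, hℓ₁0, hpencil⟩ := exists_pencil_of_linearIndependent
    (linearIndependent_fin2.2 ⟨hP, fun c hc => hPQ ⟨c, hc.symm⟩⟩)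
  have hψ : ∀ i j, ψ i j ∈ Submodule.span k {ℓ₁, ℓ₂} := fun i j =>
    hpencil _ (hlin i j) (hψP i j) (congrFun (congrFun hψQ i) j)
  have hminor_mem : ∀ i, minor i ∈ Submodule.span k (Set.range ![ℓ₁ * ℓ₁, ℓ₁ * ℓ₂, ℓ₂ * ℓ₂]) :=
    fun i => hminor ▸ sub_mem (mul_mem_span_range_of_mem_span_pair (hψ _ _) (hψ _ _))
      (mul_mem_span_range_of_mem_span_pair (hψ _ _) (hψ _ _))
  have hminor_indep : LinearIndependent k minor :=
    Fintype.linearIndependent_iff.2 fun c hc => congrFun (hindep c (by simpa [C_mul'] using hc))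
  obtain ⟨c, hc0, hc⟩ := exists_ne_zero_sum_smul_eq_sq hminor_indep hℓ₁0 hminor_mem
  exact hrank1 c hc0 ⟨ℓ₁, hℓ₁, by simpa [C_mul'] using hc⟩

/-- Let `ψ` be a 3×2 matrix of linear forms in 4 variables over an
algebraically closed field whose 2×2 minors are linearly independent and no
nonzero linear combination of the minors is the square of a linear form.
If `ψ` vanishes identically at a point `P` of `P³`, then at every other
point `Q` of the locus `{rank ψ ≤ 1}`, the matrix `ψ(Q)` has rank exactly 1. -/
theorem rank_one_at_other_points {k : Type*} [Field k] [IsAlgClosed k]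
    (ψ : Matrix (Fin 3) (Fin 2) (MvPolynomial (Fin 4) k))
    (hlin : ∀ i j, (ψ i j).IsHomogeneous 1)
    (minor : Fin 3 → MvPolynomial (Fin 4) k)
    (hminor : minor = fun i =>
      ψ (i + 1) 0 * ψ (i + 2) 1 - ψ (i + 1) 1 * ψ (i + 2) 0)
    (hindep : ∀ c : Fin 3 → k, (∑ i, C (c i) * minor i) = 0 → c = 0)
    (hrank1 : ∀ c : Fin 3 → k, c ≠ 0 →
      ¬ ∃ ℓ : MvPolynomial (Fin 4) k, ℓ.IsHomogeneous 1 ∧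
        (∑ i, C (c i) * minor i) = ℓ ^ 2)
    (P : Fin 4 → k) (hP : P ≠ 0) (hψP : ∀ i j, eval P (ψ i j) = 0)
    (Q : Fin 4 → k) (hQ : Q ≠ 0) (hPQ : ¬ ∃ c : k, Q = c • P)
    (hQΓ : ∀ i, eval Q (minor i) = 0) :
    (Matrix.of fun i j => eval Q (ψ i j)).rank = 1 :=
  rank_one_at_other_points_general ψ hlin minor hminor hindep hrank1 P hP hψP Q hPQ hQΓ
end

section
/- The set X ⊂ P^4 over an algebraically closed field k (char k ≠ 5) defined by the condition that the 3×5 matrix with rows (x_0^2, x_1^2, x_2^2, x_3^2, x_4^2), (x_1x_4, x_0x_2, x_1x_3, x_2x_4, x_0x_3), (x_2x_3, x_3x_4, x_0x_4, x_0x_1, x_1x_2) has rank ≤ 1, when evaluated at any of its points, yields a column vector proportional to one of the six points (1:0:0) or (1:ζ^i:ζ^{-i}) (i = 0,...,4) of P^2, where ζ is a primitive 5th root of unity; and these six points are exactly the points (ξ:η:ν) ∈ P^2 at which the 3×4 matrix with rows (ξ, η, ν, 0), (ν, ξ, 0, -η), (0, 0, η, ν) has rank ≤ 2. -/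
/-- The 3×5 matrix of quadratic monomials defining the syzygetic locus of the
Hesse pencil of genus one curves of degree 5. -/
def syzMatrix {k : Type*} [Field k] (x : Fin 5 → k) : Matrix (Fin 3) (Fin 5) k :=
  !![x 0 ^ 2, x 1 ^ 2, x 2 ^ 2, x 3 ^ 2, x 4 ^ 2;
     x 1 * x 4, x 0 * x 2, x 1 * x 3, x 2 * x 4, x 0 * x 3;
     x 2 * x 3, x 3 * x 4, x 0 * x 4, x 0 * x 1, x 1 * x 2]

/-- The 3×4 matrix whose rank ≤ 2 locus in `P²` consists of six points. -/
def sixPtMatrix {k : Type*} [Field k] (ξ η ν : k) : Matrix (Fin 3) (Fin 4) k :=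
  !![ξ, η, ν, 0;
     ν, ξ, 0, -η;
     0, 0, η, ν]

/-- `p ∈ P²` is one of the six points `(1:0:0)` or `(1:ζ^i:ζ^{-i})`. -/
def IsSixPoint {k : Type*} [Field k] (ζ : k) (p : Fin 3 → k) : Prop :=
  ∃ c : k, c ≠ 0 ∧
    (p = c • ![1, 0, 0] ∨
      ∃ i : Fin 5, p = c • ![1, ζ ^ (i : ℕ), ζ ^ (5 - (i : ℕ))])

/-!
The shift `xᵢ ↦ xᵢ₊₁` permutes the columns of `syzMatrix` cyclically, so it suffices to treat
the first column `(ξ, η, ν) = (x₀², x₁x₄, x₂x₃)`. At a point where `syzMatrix` has rank `≤ 1`,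
combinations of its `2 × 2` minors show that this column satisfies the cubics
`η (ξ² - ην) = 0`, `ξη² = ν³`, `η³ = ξν²`, which are `3 × 3` minors of `sixPtMatrix`.
These cubics cut out the six points: `η = 0` forces `(1:0:0)`; otherwise `ξ² = ην` and
`η³ = ξν²` give `(η/ξ)⁵ = 1`, so `η/ξ = ζⁱ` and `ν/ξ = ζ⁻ⁱ`. Conversely, at each of the six
points the vector `(ξ², -ξη, -ν²)`, or `(0, 0, 1)` at `(1:0:0)`, lies in the left kernel of
`sixPtMatrix`.
-/

namespace Matrix

variable {K m n : Type*} [Field K]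

theorem det_submatrix_eq_zero_of_rank_lt [Fintype n] [DecidableEq m] [DecidableEq n] {p : ℕ}
    (A : Matrix m n K) (f : Fin p → m) (g : Fin p → n) (h : A.rank < p) :
    (A.submatrix f g).det = 0 := by
  by_contra hdet
  have := (rank_of_det_ne_zero hdet).symm.trans_le (rank_submatrix_le A f g)
  rw [Fintype.card_fin] at this
  omega

theorem mul_eq_mul_of_rank_le_one [Fintype n] [DecidableEq m] [DecidableEq n]
    {A : Matrix m n K} (h : A.rank ≤ 1) (i i' : m) (j j' : n) :
    A i j * A i' j' = A i j' * A i' j := by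
  have := A.det_submatrix_eq_zero_of_rank_lt ![i, i'] ![j, j'] (by omega)
  rw [det_fin_two] at this
  simpa [sub_eq_zero] using this

theorem rank_lt_card_height_of_vecMul_eq_zero [Fintype m] [Fintype n] (A : Matrix m n K)
    {v : m → K} (hv : v ≠ 0) (h : v ᵥ* A = 0) : A.rank < Fintype.card m := by
  have hdep : ¬LinearIndependent K A.row := fun hli =>
    hv (funext (Fintype.linearIndependent_iff.mp hli v (by rwa [vecMul_eq_sum] at h)))
  rw [rank_eq_finrank_span_row]
  exact (finrank_range_le_card _).lt_of_ne
    fun heq => hdep (linearIndependent_iff_card_eq_finrank_span.mpr heq.symm)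

end Matrix

open Matrix

section

variable {k : Type*} [Field k]

theorem isSixPoint_of_cubics {ζ : k} (hζ : IsPrimitiveRoot ζ 5) {ξ η ν : k}
    (h0 : ¬(ξ = 0 ∧ η = 0 ∧ ν = 0)) (h₁ : η * (ξ ^ 2 - η * ν) = 0) (h₂ : ξ * η ^ 2 = ν ^ 3)
    (h₃ : η ^ 3 = ξ * ν ^ 2) : IsSixPoint ζ ![ξ, η, ν] := by
  by_cases hη : η = 0
  · have hν : ν = 0 := pow_eq_zero_iff three_ne_zero |>.mp (by rw [← h₂, hη]; ring)
    refine ⟨ξ, fun hξ => h0 ⟨hξ, hη, hν⟩, Or.inl ?_⟩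
    ext i; fin_cases i <;> simp [hη, hν]
  have hξ2 : ξ ^ 2 = η * ν := sub_eq_zero.mp ((mul_eq_zero.mp h₁).resolve_left hη)
  have hξ : ξ ≠ 0 := by
    rintro rfl
    have hν : ν = 0 := (mul_eq_zero.mp (by rw [← hξ2]; ring)).resolve_left hη
    exact hη (pow_eq_zero_iff three_ne_zero |>.mp (by rw [h₃, hν]; ring))
  have h5 : (η / ξ) ^ 5 = 1 := by
    rw [div_pow, div_eq_one_iff_eq (pow_ne_zero 5 hξ)]
    linear_combination η ^ 2 * h₃ - ξ * (η * ν + ξ ^ 2) * hξ2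
  obtain ⟨i, hi, hζi⟩ := hζ.eq_pow_of_pow_eq_one h5
  have hinv : ζ ^ i * ζ ^ (5 - i) = 1 := by
    rw [← pow_add, Nat.add_sub_cancel' hi.le, hζ.pow_eq_one]
  have hηξ : η = ξ * ζ ^ i := by rw [hζi]; field_simp
  have hξν : ξ = ζ ^ i * ν :=
    sub_eq_zero.mp ((mul_eq_zero.mp (by linear_combination hξ2 + ν * hηξ)).resolve_left hξ)
  have hνξ : ν = ξ * ζ ^ (5 - i) := by linear_combination -ν * hinv - ζ ^ (5 - i) * hξν
  refine ⟨ξ, hξ, Or.inr ⟨⟨i, hi⟩, ?_⟩⟩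
  ext t; fin_cases t <;> simp [hηξ, hνξ]

theorem syzMatrix_submatrix_addRight (x : Fin 5 → k) (j : Fin 5) :
    (syzMatrix x).submatrix id (Equiv.addRight j) = syzMatrix fun i => x (i + j) := by
  ext a b
  fin_cases a <;> fin_cases b <;> fin_cases j <;> simp [syzMatrix] <;> ring

theorem isSixPoint_syzMatrix_col_zero {ζ : k} (hζ : IsPrimitiveRoot ζ 5) {x : Fin 5 → k}
    (hrank : (syzMatrix x).rank ≤ 1) (hcol : (fun i => syzMatrix x i 0) ≠ 0) :
    IsSixPoint ζ fun i => syzMatrix x i 0 := by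
  have hcv : (fun i => syzMatrix x i 0) = ![x 0 ^ 2, x 1 * x 4, x 2 * x 3] := by
    ext i; fin_cases i <;> rfl
  have m := mul_eq_mul_of_rank_le_one hrank
  -- `mabcd` is the vanishing of the `2 × 2` minor on rows `a, b` and columns `c, d`
  have m0124 := m 0 1 2 4
  have m0202 := m 0 2 0 2
  have m0104 := m 0 1 0 4
  have m0212 := m 0 2 1 2
  have m0102 := m 0 1 0 2
  have m0113 := m 0 1 1 3
  simp only [syzMatrix, of_apply, cons_val', cons_val, cons_val_fin_one, cons_val_zero,
    cons_val_one] at m0124 m0202 m0104 m0212 m0102 m0113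
  rw [hcv] at hcol ⊢
  refine isSixPoint_of_cubics hζ (fun ⟨h0, h1, h2⟩ => hcol ?_) ?_ ?_ ?_
  · ext i; fin_cases i <;> simp [h0, h1, h2]
  · linear_combination x 1 * x 2 * m0124 + x 0 * x 1 * m0202
  · linear_combination -x 3 * x 4 * m0104 + x 4 ^ 2 * m0124 + x 3 ^ 2 * m0202 + x 0 * x 4 * m0212
  · linear_combination x 0 * x 1 * m0102 - x 1 ^ 2 * m0104 + x 0 * x 2 * m0113

theorem isSixPoint_syzMatrix_col {ζ : k} (hζ : IsPrimitiveRoot ζ 5) {x : Fin 5 → k}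
    (hrank : (syzMatrix x).rank ≤ 1) (j : Fin 5) (hcol : (fun i => syzMatrix x i j) ≠ 0) :
    IsSixPoint ζ fun i => syzMatrix x i j := by
  have hrot := syzMatrix_submatrix_addRight x j
  have hcol_eq : (fun i => syzMatrix x i j) = fun i => syzMatrix (fun i => x (i + j)) i 0 := by
    simp [← hrot]
  rw [hcol_eq] at hcol ⊢
  refine isSixPoint_syzMatrix_col_zero hζ ?_ hcol
  rw [← hrot]
  exact (rank_submatrix _ (Equiv.refl _) (Equiv.addRight j)).trans_le hrank

theorem isSixPoint_of_rank_sixPtMatrix_le_two {ζ : k} (hζ : IsPrimitiveRoot ζ 5) {ξ η ν : k}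
    (h0 : ¬(ξ = 0 ∧ η = 0 ∧ ν = 0)) (hrank : (sixPtMatrix ξ η ν).rank ≤ 2) :
    IsSixPoint ζ ![ξ, η, ν] := by
  have minor (g : Fin 3 → Fin 4) :=
    (sixPtMatrix ξ η ν).det_submatrix_eq_zero_of_rank_lt id g (by omega)
  have d012 := minor ![0, 1, 2]
  have d023 := minor ![0, 2, 3]
  have d123 := minor ![1, 2, 3]
  simp only [det_fin_three, submatrix_apply, id_eq, sixPtMatrix, of_apply, cons_val',
    cons_val_zero, cons_val_one, cons_val, cons_val_fin_one] at d012 d023 d123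
  exact isSixPoint_of_cubics hζ h0 (by linear_combination d012) (by linear_combination d023)
    (by linear_combination d123)

theorem vecMul_sixPtMatrix (ξ η ν : k) :
    ![ξ ^ 2, -(ξ * η), -ν ^ 2] ᵥ* sixPtMatrix ξ η ν =
      ![ξ * (ξ ^ 2 - η * ν), 0, ν * (ξ ^ 2 - η * ν), ξ * η ^ 2 - ν ^ 3] := by
  ext j; fin_cases j <;> simp [sixPtMatrix, vecMul, dotProduct, Fin.sum_univ_succ] <;> ring

theorem rank_sixPtMatrix_le_two_of_isSixPoint {ζ : k} (hζ : ζ ^ 5 = 1) {ξ η ν : k}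
    (hp : IsSixPoint ζ ![ξ, η, ν]) : (sixPtMatrix ξ η ν).rank ≤ 2 := by
  suffices ∃ v ≠ 0, v ᵥ* sixPtMatrix ξ η ν = 0 by
    obtain ⟨v, hv, hker⟩ := this
    have := (sixPtMatrix ξ η ν).rank_lt_card_height_of_vecMul_eq_zero hv hker
    rw [Fintype.card_fin] at this
    omega
  obtain ⟨c, hc, hp | ⟨i, hp⟩⟩ := hp
  · obtain ⟨rfl, rfl, rfl⟩ : ξ = c ∧ η = 0 ∧ ν = 0 :=
      ⟨by simpa using congr_fun hp 0, by simpa using congr_fun hp 1, by simpa using congr_fun hp 2⟩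
    refine ⟨![0, 0, 1], by simp, ?_⟩
    ext j; fin_cases j <;> simp [sixPtMatrix, vecMul, dotProduct, Fin.sum_univ_succ]
  · set u := ζ ^ (i : ℕ)
    set w := ζ ^ (5 - (i : ℕ))
    have hu : u ^ 5 = 1 := by rw [← pow_mul, mul_comm, pow_mul, hζ, one_pow]
    have huw : u * w = 1 := by rw [← pow_add, Nat.add_sub_cancel' i.isLt.le, hζ]
    obtain ⟨rfl, rfl, rfl⟩ : ξ = c ∧ η = c * u ∧ ν = c * w :=
      ⟨by simpa using congr_fun hp 0, by simpa using congr_fun hp 1, by simpa using congr_fun hp 2⟩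
    have h₁ : ξ ^ 2 - ξ * u * (ξ * w) = 0 := by linear_combination -ξ ^ 2 * huw
    have h₂ : ξ * (ξ * u) ^ 2 - (ξ * w) ^ 3 = 0 := by
      linear_combination ξ ^ 3 * (w ^ 3 * hu - u ^ 2 * ((u * w) ^ 2 + u * w + 1) * huw)
    refine ⟨![ξ ^ 2, -(ξ * (ξ * u)), -(ξ * w) ^ 2], by simp [hc], ?_⟩
    rw [vecMul_sixPtMatrix, h₁, h₂]
    simp

end

theorem syzygetic_image_general {k : Type*} [Field k] (ζ : k) (hζ : IsPrimitiveRoot ζ 5) :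
    (∀ x : Fin 5 → k, x ≠ 0 → (syzMatrix x).rank ≤ 1 →
      ∀ j : Fin 5, (∀ i, syzMatrix x i j = 0) ∨
        IsSixPoint ζ (fun i => syzMatrix x i j)) ∧
    (∀ ξ η ν : k, ¬(ξ = 0 ∧ η = 0 ∧ ν = 0) →
      ((sixPtMatrix ξ η ν).rank ≤ 2 ↔ IsSixPoint ζ ![ξ, η, ν])) := by
  refine ⟨fun x _ hrank j => ?_, fun ξ η ν h0 => ⟨isSixPoint_of_rank_sixPtMatrix_le_two hζ h0,
    rank_sixPtMatrix_le_two_of_isSixPoint hζ.pow_eq_one⟩⟩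
  rw [or_iff_not_imp_left]
  exact fun hcol => isSixPoint_syzMatrix_col hζ hrank j fun h => hcol (congr_fun h)

/-- At any point of the locus `{rank ≤ 1}` of the 3×5 matrix of quadratic
monomials, every nonzero column is proportional to one of the six points
`(1:0:0)`, `(1:ζ^i:ζ^{-i})` of `P²`; and these six points are exactly the
points `(ξ:η:ν)` where the 3×4 matrix `sixPtMatrix` has rank at most 2. -/
theorem syzygetic_image {k : Type*} [Field k] [IsAlgClosed k]
    (hchar : (5 : k) ≠ 0) (ζ : k) (hζ : IsPrimitiveRoot ζ 5) :
    (∀ x : Fin 5 → k, x ≠ 0 → (syzMatrix x).rank ≤ 1 →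
      ∀ j : Fin 5, (∀ i, syzMatrix x i j = 0) ∨
        IsSixPoint ζ (fun i => syzMatrix x i j)) ∧
    (∀ ξ η ν : k, ¬(ξ = 0 ∧ η = 0 ∧ ν = 0) →
      ((sixPtMatrix ξ η ν).rank ≤ 2 ↔ IsSixPoint ζ ![ξ, η, ν])) :=
  syzygetic_image_general ζ hζ
end
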